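/- arXiv:1202.2057 — 6 statements merged into one kernel-verified Lean document; each statement's English description precedes it below -/
import Mathlib

section
/- Let H be a complex Hilbert space and S : H →L[ℂ] H a continuous linear map such that S ∘ T = T ∘ S for every compact operator T : H →L[ℂ] H. Then there exists λ ∈ ℂ with S = λ • (id H), i.e., the commutant of the compact operators consists of the scalar multiples of the identity. -/
open scoped InnerProductSpace

/-- A rank-one operator `z ↦ ⟪y, z⟫ • x` is compact. -/
lemma rankOne_isCompact {H : Type*} [NormedAddCommGroup H] [InnerProductSpace ℂ H]
    (x y : H) : IsCompactOperator ((innerSL ℂ y).smulRight x) := by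
  rw [isCompactOperator_iff_exists_mem_nhds_image_subset_compact]
  refine ⟨Metric.ball 0 1, Metric.ball_mem_nhds 0 one_pos,
    (fun c : ℂ => c • x) '' Metric.closedBall 0 ‖y‖,
    ((isCompact_closedBall 0 ‖y‖).image (by continuity)), ?_⟩
  rintro _ ⟨z, hz, rfl⟩
  refine ⟨⟪y, z⟫_ℂ, ?_, rfl⟩
  rw [Metric.mem_closedBall, dist_zero_right]
  calc ‖⟪y, z⟫_ℂ‖ ≤ ‖y‖ * ‖z‖ := norm_inner_le_norm y z
    _ ≤ ‖y‖ * 1 := by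
        gcongr; exact le_of_lt (by simpa [dist_zero_right] using hz)
    _ = ‖y‖ := mul_one _

/-- Let `H` be a complex Hilbert space and `S : H →L[ℂ] H` a continuous
linear map commuting with every compact operator `T : H →L[ℂ] H`.  Then `S` is a scalar
multiple of the identity: the commutant of the compact operators consists of the scalar
multiples of the identity. -/
theorem stmt_3 {H : Type*} [NormedAddCommGroup H] [InnerProductSpace ℂ H] [CompleteSpace H]
    (S : H →L[ℂ] H)
    (hcomm : ∀ T : H →L[ℂ] H, IsCompactOperator T → S.comp T = T.comp S) :
    ∃ c : ℂ, S = c • ContinuousLinearMap.id ℂ H := by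
  by_cases htriv : ∀ z : H, z = 0
  · exact ⟨0, by ext z; simp [htriv z]⟩
  push_neg at htriv
  obtain ⟨z₀, hz₀⟩ := htriv
  refine ⟨⟪z₀, S z₀⟫_ℂ / (‖z₀‖ ^ 2 : ℂ), ?_⟩
  ext x
  have key := hcomm _ (rankOne_isCompact x z₀)
  have h := congrArg (fun T : H →L[ℂ] H => T z₀) key
  simp only [ContinuousLinearMap.comp_apply, ContinuousLinearMap.smulRight_apply,
    innerSL_apply_apply, map_smul] at h
  -- h : ⟪z₀, z₀⟫ • S x = ⟪z₀, S z₀⟫ • x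
  have hn : (‖z₀‖ ^ 2 : ℂ) ≠ 0 := by
    exact pow_ne_zero 2 (by exact_mod_cast norm_ne_zero_iff.mpr hz₀)
  have h' : (‖z₀‖ ^ 2 : ℂ) • S x = ⟪z₀, S z₀⟫_ℂ • x := by
    rwa [inner_self_eq_norm_sq_to_K] at h
  simp only [ContinuousLinearMap.smul_apply, ContinuousLinearMap.id_apply]
  rw [div_eq_mul_inv, mul_comm, mul_smul, ← h', smul_smul, inv_mul_cancel₀ hn, one_smul]
end

section
/- Let H be a complex Hilbert space and let Φ : K(H) → K(H) be a *-algebra automorphism, i.e., a ℂ-linear bijection with Φ(T ∘ S) = Φ(T) ∘ Φ(S) and Φ(T*) = Φ(T)* for all compact operators T, S. Then Φ is spatial: there exists a unitary u : H ≃ₗᵢ[ℂ] H such that Φ(T) = u ∘ T ∘ u⁻¹ for every compact operator T. -/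
set_option linter.unusedSectionVars false

open ContinuousLinearMap
open scoped InnerProductSpace

section Aux

variable {H : Type*} [NormedAddCommGroup H] [InnerProductSpace ℂ H] [CompleteSpace H]

/-- rank one operator `z ↦ ⟪y, z⟫ • x`. -/
noncomputable def rk (x y : H) : H →L[ℂ] H := (innerSL ℂ y).smulRight x

lemma rk_apply (x y z : H) : rk x y z = ⟪y, z⟫_ℂ • x := rfl

lemma rk_compact (x y : H) : IsCompactOperator (rk x y) := by
  refine (isCompactOperator_iff_image_ball_subset_compact ((rk x y).toLinearMap)
      (r := 1) one_pos).mpr ⟨(fun c : ℂ => c • x) '' Metric.closedBall 0 ‖y‖,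
    (isCompact_closedBall 0 ‖y‖).image (by continuity), ?_⟩
  rintro _ ⟨z, hz, rfl⟩
  refine ⟨⟪y, z⟫_ℂ, ?_, rfl⟩
  simp only [Metric.mem_ball, dist_zero_right] at hz
  simp only [Metric.mem_closedBall, dist_zero_right]
  calc ‖⟪y, z⟫_ℂ‖ ≤ ‖y‖ * ‖z‖ := norm_inner_le_norm y z
    _ ≤ ‖y‖ * 1 := by gcongr
    _ = ‖y‖ := mul_one _

lemma rk_adjoint (x y : H) : adjoint (rk x y) = rk y x := by
  symm
  rw [eq_adjoint_iff]
  intro a b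
  simp [rk_apply, inner_smul_left, inner_smul_right, mul_comm]

lemma rk_comp (x y z w : H) : (rk x y).comp (rk z w) = ⟪y, z⟫_ℂ • rk x w := by
  ext a; simp [rk_apply, smul_smul, mul_comm]

lemma comp_rk (S : H →L[ℂ] H) (x y : H) : S.comp (rk x y) = rk (S x) y := by
  ext a; simp [rk_apply]

lemma rk_add (x x' y : H) : rk (x + x') y = rk x y + rk x' y := by
  ext a; simp [rk_apply]

lemma rk_smul (c : ℂ) (x y : H) : rk (c • x) y = c • rk x y := by
  ext a; simp [rk_apply, smul_smul, mul_comm]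

end Aux

/-- The `*`-algebra `K(H)` of compact operators on `H`, realized as the subtype of
continuous linear maps `H →L[ℂ] H` that are compact operators. -/
abbrev CompactOp (H : Type*) [NormedAddCommGroup H] [NormedSpace ℂ H] : Type _ :=
  {T : H →L[ℂ] H // IsCompactOperator T}

/-- Every `*`-algebra automorphism `Φ` of the algebra `K(H)` of compact
operators on a complex Hilbert space `H` (a `ℂ`-linear bijection preserving composition
and adjoints) is spatial: there is a unitary `u : H ≃ₗᵢ[ℂ] H` with
`Φ T = u ∘ T ∘ u⁻¹` for every compact operator `T`. -/
theorem stmt_5 {H : Type*} [NormedAddCommGroup H] [InnerProductSpace ℂ H] [CompleteSpace H]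
    (Φ : CompactOp H → CompactOp H)
    (hbij : Function.Bijective Φ)
    (haddΦ : ∀ (T S : CompactOp H) (h : IsCompactOperator (T.1 + S.1)),
      (Φ ⟨T.1 + S.1, h⟩).1 = (Φ T).1 + (Φ S).1)
    (hsmulΦ : ∀ (c : ℂ) (T : CompactOp H) (h : IsCompactOperator (c • T.1)),
      (Φ ⟨c • T.1, h⟩).1 = c • (Φ T).1)
    (hmulΦ : ∀ (T S : CompactOp H) (h : IsCompactOperator (T.1.comp S.1)),
      (Φ ⟨T.1.comp S.1, h⟩).1 = (Φ T).1.comp (Φ S).1)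
    (hstarΦ : ∀ (T : CompactOp H) (h : IsCompactOperator (ContinuousLinearMap.adjoint T.1)),
      (Φ ⟨ContinuousLinearMap.adjoint T.1, h⟩).1 = ContinuousLinearMap.adjoint (Φ T).1) :
    ∃ u : H ≃ₗᵢ[ℂ] H, ∀ (T : CompactOp H) (x : H), (Φ T).1 x = u (T.1 (u.symm x)) := by
  classical
  by_cases hsub : Subsingleton H
  · exact ⟨LinearIsometryEquiv.refl ℂ H, fun T x => Subsingleton.elim _ _⟩
  have : Nontrivial H := not_subsingleton_iff_nontrivial.mp hsub
  obtain ⟨e0, he0⟩ := exists_ne (0 : H)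
  set e : H := (‖e0‖⁻¹ : ℂ) • e0 with he_def
  have hne : ‖e‖ = 1 := by rw [he_def]; exact norm_smul_inv_norm he0
  have hee : ⟪e, e⟫_ℂ = 1 := by
    rw [inner_self_eq_norm_sq_to_K, hne]; norm_num
  -- helpers
  have Φc : ∀ (T S : CompactOp H), T.1 = S.1 → (Φ T).1 = (Φ S).1 :=
    fun _ _ h => congrArg (fun t => (Φ t).1) (Subtype.ext h)
  set Φe := Equiv.ofBijective Φ hbij with hΦe
  have hΦsymm : ∀ A : CompactOp H, Φ (Φe.symm A) = A := fun A => Φe.apply_symm_apply A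
  have cc : ∀ (T S : CompactOp H), IsCompactOperator (T.1.comp S.1) :=
    fun T S => T.2.comp_clm S.1
  have cadd : ∀ (T S : CompactOp H), IsCompactOperator (T.1 + S.1) :=
    fun T S => T.2.add S.2
  have csm : ∀ (c : ℂ) (T : CompactOp H), IsCompactOperator (c • T.1) :=
    fun c T => T.2.smul c
  set p : CompactOp H := ⟨rk e e, rk_compact e e⟩ with hp
  set q := Φ p with hqdef
  -- q is idempotent
  have hpp : p.1.comp p.1 = p.1 := by
    show (rk e e).comp (rk e e) = rk e e
    rw [rk_comp, hee, one_smul]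
  have hq_idem : q.1.comp q.1 = q.1 :=
    ((hmulΦ p p (cc p p)).symm).trans (Φc _ _ hpp)
  -- q is self-adjoint
  have hpadj : ContinuousLinearMap.adjoint p.1 = p.1 := rk_adjoint e e
  have hq_sa : ContinuousLinearMap.adjoint q.1 = q.1 :=
    ((hstarΦ p (by rw [hpadj]; exact p.2)).symm).trans (Φc _ _ hpadj)
  -- Φ of zero is zero
  have hΦ0 : (Φ (⟨0, isCompactOperator_zero⟩ : CompactOp H)).1 = 0 := by
    have h := haddΦ ⟨0, isCompactOperator_zero⟩ ⟨0, isCompactOperator_zero⟩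
      (cadd ⟨0, isCompactOperator_zero⟩ ⟨0, isCompactOperator_zero⟩)
    have h2 : (Φ (⟨0, isCompactOperator_zero⟩ : CompactOp H)).1
        = (Φ (⟨0, isCompactOperator_zero⟩ : CompactOp H)).1
          + (Φ (⟨0, isCompactOperator_zero⟩ : CompactOp H)).1 :=
      (Φc _ ⟨(0 : H →L[ℂ] H) + 0, cadd ⟨0, isCompactOperator_zero⟩ ⟨0, isCompactOperator_zero⟩⟩
        (by simp)).trans (by exact h)
    have h3 : (Φ (⟨0, isCompactOperator_zero⟩ : CompactOp H)).1 + 0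
        = (Φ (⟨0, isCompactOperator_zero⟩ : CompactOp H)).1
          + (Φ (⟨0, isCompactOperator_zero⟩ : CompactOp H)).1 := by
      rw [add_zero]; exact h2
    exact (add_left_cancel h3).symm
  have he_ne : e ≠ 0 := by
    intro h; rw [h] at hee; simp at hee
  -- q is nonzero
  have hq_ne : q.1 ≠ 0 := by
    intro h
    have hpq : p = (⟨0, isCompactOperator_zero⟩ : CompactOp H) :=
      hbij.1 (Subtype.ext (h.trans hΦ0.symm))
    have : p.1 e = 0 := by rw [hpq]; rfl
    rw [show p.1 e = e from by rw [show p.1 = rk e e from rfl, rk_apply, hee, one_smul]] at this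
    exact he_ne this
  -- find a unit vector f with q f = f
  have hqy : ∃ y, q.1 y ≠ 0 := by
    by_contra h; push_neg at h; exact hq_ne (ContinuousLinearMap.ext (by simpa using h))
  obtain ⟨y0, hy0⟩ := hqy
  set f : H := (‖q.1 y0‖⁻¹ : ℂ) • (q.1 y0) with hf_def
  have hnf : ‖f‖ = 1 := by rw [hf_def]; exact norm_smul_inv_norm hy0
  have hff : ⟪f, f⟫_ℂ = 1 := by
    rw [inner_self_eq_norm_sq_to_K, hnf]; norm_num
  have hqf : q.1 f = f := by
    rw [hf_def, map_smul]
    congr 1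
    conv_lhs => rw [← ContinuousLinearMap.comp_apply, hq_idem]
  -- key compression identity
  have key : ∀ A : CompactOp H,
      q.1.comp (A.1.comp q.1) = ⟪e, (Φe.symm A).1 e⟫_ℂ • q.1 := by
    intro A
    have hBA : Φ (Φe.symm A) = A := hΦsymm A
    set B := Φe.symm A with hB
    have h1 : (Φ ⟨B.1.comp p.1, cc B p⟩).1 = A.1.comp q.1 := by
      rw [hmulΦ B p (cc B p), hBA]
    have h3 : p.1.comp (B.1.comp p.1) = ⟪e, B.1 e⟫_ℂ • p.1 := by
      rw [show p.1 = rk e e from rfl, comp_rk, rk_comp]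
    calc q.1.comp (A.1.comp q.1)
        = (Φ p).1.comp (Φ ⟨B.1.comp p.1, cc B p⟩).1 := by rw [h1]
      _ = (Φ ⟨p.1.comp (⟨B.1.comp p.1, cc B p⟩ : CompactOp H).1, cc p _⟩).1 :=
          (hmulΦ p _ _).symm
      _ = (Φ ⟨⟪e, B.1 e⟫_ℂ • p.1, csm _ p⟩).1 := Φc _ _ h3
      _ = ⟪e, B.1 e⟫_ℂ • q.1 := hsmulΦ _ p _
  -- q is the rank-one projection onto f
  have hq_rank1 : ∀ x : H, q.1 x = ⟪f, x⟫_ℂ • f := by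
    intro x
    have h := key ⟨rk x f, rk_compact x f⟩
    have h' := congrArg (fun (S : H →L[ℂ] H) => S f) h
    simp only [ContinuousLinearMap.comp_apply, ContinuousLinearMap.smul_apply] at h'
    rw [hqf] at h'
    rw [show (⟨rk x f, rk_compact x f⟩ : CompactOp H).1 f = x from by
      rw [show (⟨rk x f, rk_compact x f⟩ : CompactOp H).1 = rk x f from rfl,
        rk_apply, hff, one_smul]] at h'
    have h2 : ⟪f, q.1 x⟫_ℂ = ⟪f, x⟫_ℂ := by
      conv_lhs => rw [← hq_sa]
      rw [ContinuousLinearMap.adjoint_inner_right, hqf]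
    rw [h'] at h2 ⊢
    rw [inner_smul_right, hff, mul_one] at h2
    rw [h2]
  -- the candidate unitary
  set Tx : H → CompactOp H := fun x => ⟨rk x e, rk_compact x e⟩ with hTx
  set U : H → H := fun x => (Φ (Tx x)).1 f with hUdef
  have hU_add : ∀ x y : H, U (x + y) = U x + U y := by
    intro x y
    have h1 : (Tx (x + y)).1 = (Tx x).1 + (Tx y).1 := rk_add x y e
    calc U (x + y) = (Φ (Tx (x + y))).1 f := rfl
      _ = (Φ ⟨(Tx x).1 + (Tx y).1, cadd (Tx x) (Tx y)⟩).1 f := by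
            rw [Φc _ ⟨(Tx x).1 + (Tx y).1, cadd (Tx x) (Tx y)⟩ h1]
      _ = ((Φ (Tx x)).1 + (Φ (Tx y)).1) f := by rw [haddΦ]
      _ = U x + U y := rfl
  have hU_smul : ∀ (c : ℂ) (x : H), U (c • x) = c • U x := by
    intro c x
    have h1 : (Tx (c • x)).1 = c • (Tx x).1 := rk_smul c x e
    calc U (c • x) = (Φ (Tx (c • x))).1 f := rfl
      _ = (Φ ⟨c • (Tx x).1, csm c (Tx x)⟩).1 f := by
            rw [Φc _ ⟨c • (Tx x).1, csm c (Tx x)⟩ h1]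
      _ = (c • (Φ (Tx x)).1) f := by rw [hsmulΦ]
      _ = c • U x := rfl
  have hU_inner : ∀ x y : H, ⟪U x, U y⟫_ℂ = ⟪x, y⟫_ℂ := by
    intro x y
    have hadj : ContinuousLinearMap.adjoint (Φ (Tx x)).1
        = (Φ ⟨rk e x, rk_compact e x⟩).1 := by
      refine ((hstarΦ (Tx x) (by
        rw [show ContinuousLinearMap.adjoint (Tx x).1 = rk e x from rk_adjoint x e]
        exact rk_compact e x)).symm).trans (Φc _ ⟨rk e x, rk_compact e x⟩ (rk_adjoint x e))
    have hcomp : (ContinuousLinearMap.adjoint (Φ (Tx x)).1).comp ((Φ (Tx y)).1)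
        = ⟪x, y⟫_ℂ • q.1 := by
      rw [hadj, ← hmulΦ ⟨rk e x, rk_compact e x⟩ (Tx y) (cc _ _)]
      have h3 : (rk e x).comp (rk y e) = ⟪x, y⟫_ℂ • rk e e := rk_comp e x y e
      calc (Φ ⟨((⟨rk e x, rk_compact e x⟩ : CompactOp H)).1.comp (Tx y).1, cc _ _⟩).1
          = (Φ ⟨⟪x, y⟫_ℂ • p.1, csm _ p⟩).1 := Φc _ _ h3
        _ = ⟪x, y⟫_ℂ • q.1 := hsmulΦ _ p _
    calc ⟪U x, U y⟫_ℂ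
        = ⟪f, (ContinuousLinearMap.adjoint (Φ (Tx x)).1) ((Φ (Tx y)).1 f)⟫_ℂ :=
          (ContinuousLinearMap.adjoint_inner_right _ _ _).symm
      _ = ⟪f, ((ContinuousLinearMap.adjoint (Φ (Tx x)).1).comp ((Φ (Tx y)).1)) f⟫_ℂ := rfl
      _ = ⟪f, (⟪x, y⟫_ℂ • q.1) f⟫_ℂ := by rw [hcomp]
      _ = ⟪x, y⟫_ℂ := by
          rw [ContinuousLinearMap.smul_apply, hqf, inner_smul_right, hff, mul_one]
  have hU_norm : ∀ x : H, ‖U x‖ = ‖x‖ := by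
    intro x
    rw [@norm_eq_sqrt_re_inner ℂ _ _ _ _ (U x), @norm_eq_sqrt_re_inner ℂ _ _ _ _ x, hU_inner x x]
  -- intertwining
  have hUS : ∀ (S : CompactOp H) (x : H), (Φ S).1 (U x) = U (S.1 x) := by
    intro S x
    have h1 : S.1.comp (Tx x).1 = (Tx (S.1 x)).1 := comp_rk S.1 x e
    calc (Φ S).1 (U x) = ((Φ S).1.comp (Φ (Tx x)).1) f := rfl
      _ = (Φ ⟨S.1.comp (Tx x).1, cc S (Tx x)⟩).1 f := by rw [hmulΦ]
      _ = (Φ (Tx (S.1 x))).1 f := by rw [Φc _ (Tx (S.1 x)) h1]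
      _ = U (S.1 x) := rfl
  -- surjectivity
  have hUe : ∀ S : CompactOp H, U (S.1 e) = (Φ S).1 f := by
    intro S
    have h1 : (Tx (S.1 e)).1 = S.1.comp p.1 := (comp_rk S.1 e e).symm
    calc U (S.1 e) = (Φ (Tx (S.1 e))).1 f := rfl
      _ = (Φ ⟨S.1.comp p.1, cc S p⟩).1 f := by rw [Φc _ ⟨S.1.comp p.1, cc S p⟩ h1]
      _ = ((Φ S).1.comp q.1) f := by rw [hmulΦ]
      _ = (Φ S).1 (q.1 f) := rfl
      _ = (Φ S).1 f := by rw [hqf]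
  have hU_surj : Function.Surjective U := by
    intro z
    refine ⟨(Φe.symm ⟨rk z f, rk_compact z f⟩).1 e, ?_⟩
    rw [hUe, hΦsymm]
    show rk z f f = z
    rw [rk_apply, hff, one_smul]
  -- assemble the unitary
  let Ulin : H →ₗ[ℂ] H :=
    { toFun := U, map_add' := hU_add, map_smul' := hU_smul }
  have hU_inj : Function.Injective Ulin := by
    intro a b hab
    have h := hU_norm (a - b)
    have hab' : U a - U b = 0 := sub_eq_zero.mpr hab
    have hUab : U (a - b) = U a - U b := by
      rw [sub_eq_add_neg, hU_add, show -b = (-1 : ℂ) • b from by simp, hU_smul]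
      simp [sub_eq_add_neg]
    rw [hUab, hab', norm_zero] at h
    exact sub_eq_zero.mp (norm_eq_zero.mp h.symm)
  let Ueq : H ≃ₗ[ℂ] H := LinearEquiv.ofBijective Ulin ⟨hU_inj, hU_surj⟩
  refine ⟨⟨Ueq, hU_norm⟩, ?_⟩
  intro T x
  have happ : U (Ueq.symm x) = x := Ueq.apply_symm_apply x
  calc (Φ T).1 x = (Φ T).1 (U (Ueq.symm x)) := by rw [happ]
    _ = U (T.1 (Ueq.symm x)) := hUS T _
end

section
/- Let H be a complex Hilbert space and let σ : K(H) → K(H) be a conjugate-linear *-algebra automorphism, i.e., an additive bijection with σ(λ • T) = (starRingEnd ℂ λ) • σ(T), σ(T ∘ S) = σ(T) ∘ σ(S), and σ(T*) = σ(T)* for all compact operators T, S and λ ∈ ℂ. Then σ is implemented by an antiunitary: there exists an antiunitary J on H such that σ(T) = J ∘ T ∘ J⁻¹ for every compact operator T. -/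
/-!
Fix a unit vector `e` and put `p = |e⟩⟨e|`. As `σ` is multiplicative and injective, `σ p` is a
nonzero idempotent, so it fixes some unit vector `f`. Set `J x = σ(|x⟩⟨e|) f`. Multiplicativity
gives `σ T (J x) = J (T x)`. Since `|e⟩⟨x| ∘ |y⟩⟨e| = ⟪x, y⟫ p` and `σ` preserves adjoints,
`⟪J x, J y⟫ = conj ⟪x, y⟫ ⟪f, σ p f⟫ = ⟪y, x⟫`, so `J` is injective. Finally, if `σ T = |y⟩⟨f|`
then `J (T e) = σ T (σ p f) = y`, so `J` is surjective.
-/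

open scoped ComplexInnerProductSpace

open Function InnerProductSpace ContinuousLinearMap

theorem injective_of_inner_map_map_swap {𝕜 E : Type*} [RCLike 𝕜] [NormedAddCommGroup E]
    [InnerProductSpace 𝕜 E] {J : E → E} (hJ : ∀ x y, inner 𝕜 (J x) (J y) = inner 𝕜 y x) :
    Injective J := by
  intro a b hab
  have hab' : inner 𝕜 a b = inner 𝕜 a a := by rw [← hJ b a, ← hJ a a, hab]
  have hba : inner 𝕜 b a = inner 𝕜 a a := by rw [← hJ a b, ← hJ a a, hab]
  have hbb : inner 𝕜 b b = inner 𝕜 a a := by rw [← hJ b b, ← hJ a a, hab]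
  rw [← sub_eq_zero, ← inner_self_eq_zero (𝕜 := 𝕜), inner_sub_left, inner_sub_right,
    inner_sub_right, hab', hba, hbb]
  ring

theorem ContinuousLinearMap.exists_norm_eq_one_apply_eq_self_of_isIdempotentElem
    {𝕜 E : Type*} [RCLike 𝕜] [NormedAddCommGroup E] [NormedSpace 𝕜 E] {P : E →L[𝕜] E}
    (hP : IsIdempotentElem P) (hP0 : P ≠ 0) : ∃ f, ‖f‖ = 1 ∧ P f = f := by
  obtain ⟨v, hv⟩ : ∃ v, P v ≠ 0 := by
    by_contra! h
    exact hP0 (ext h)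
  refine ⟨(‖P v‖⁻¹ : 𝕜) • P v, norm_smul_inv_norm hv, ?_⟩
  rw [map_smul]
  exact congr(_ • $(hP.eq) v)

theorem InnerProductSpace.isCompactOperator_rankOne {𝕜 E F : Type*} [RCLike 𝕜]
    [NormedAddCommGroup E] [InnerProductSpace 𝕜 E] [NormedAddCommGroup F]
    [InnerProductSpace 𝕜 F] (x : E) (y : F) : IsCompactOperator (rankOne 𝕜 x y) :=
  (isCompactOperator_of_locallyCompactSpace_rng (toSpanSingleton 𝕜 x)).comp_clm (innerSL 𝕜 y)

namespace CompactOp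

variable {H : Type*} [NormedAddCommGroup H] [InnerProductSpace ℂ H]

noncomputable def rankOne (x e : H) : CompactOp H :=
  ⟨InnerProductSpace.rankOne ℂ x e, isCompactOperator_rankOne x e⟩

@[simp] theorem coe_rankOne (x e : H) : (rankOne x e).1 = InnerProductSpace.rankOne ℂ x e := rfl

variable [CompleteSpace H]

-- The laws quantify over any `U` with the prescribed underlying operator, so applying them needs
-- no compactness proof.
structure IsConjLinearStarHom (σ : CompactOp H → CompactOp H) : Prop where
  map_add {T S U : CompactOp H} : U.1 = T.1 + S.1 → (σ U).1 = (σ T).1 + (σ S).1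
  map_smul (c : ℂ) {T U : CompactOp H} : U.1 = c • T.1 → (σ U).1 = starRingEnd ℂ c • (σ T).1
  map_comp {T S U : CompactOp H} : U.1 = T.1 ∘L S.1 → (σ U).1 = (σ T).1 ∘L (σ S).1
  map_adjoint {T U : CompactOp H} : U.1 = adjoint T.1 → (σ U).1 = adjoint (σ T).1

namespace IsConjLinearStarHom

variable {σ : CompactOp H → CompactOp H}

theorem eq_zero_of_map_eq_zero (hσ : IsConjLinearStarHom σ) (hinj : Injective σ)
    {T : CompactOp H} (h : (σ T).1 = 0) : T.1 = 0 := by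
  let Z : CompactOp H := ⟨0, isCompactOperator_zero⟩
  have hZ : (σ Z).1 = 0 := by simpa using hσ.map_smul 0 (T := Z) (U := Z) (zero_smul ℂ _).symm
  rw [hinj (Subtype.ext (h.trans hZ.symm) : σ T = σ Z)]

theorem comp_map_rankOne (hσ : IsConjLinearStarHom σ) (T : CompactOp H) (x e : H) :
    (σ T).1 ∘L (σ (rankOne x e)).1 = (σ (rankOne (T.1 x) e)).1 :=
  (hσ.map_comp (comp_rankOne x e T.1).symm).symm

theorem map_rankOne_add (hσ : IsConjLinearStarHom σ) (x y e : H) :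
    (σ (rankOne (x + y) e)).1 = (σ (rankOne x e)).1 + (σ (rankOne y e)).1 :=
  hσ.map_add (by rw [coe_rankOne, _root_.map_add]; rfl)

theorem map_rankOne_smul (hσ : IsConjLinearStarHom σ) (c : ℂ) (x e : H) :
    (σ (rankOne (c • x) e)).1 = starRingEnd ℂ c • (σ (rankOne x e)).1 :=
  hσ.map_smul c (by rw [coe_rankOne, _root_.map_smul]; rfl)

theorem adjoint_map_rankOne_comp (hσ : IsConjLinearStarHom σ) (x y e : H) :
    adjoint (σ (rankOne x e)).1 ∘L (σ (rankOne y e)).1 =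
      starRingEnd ℂ ⟪x, y⟫ • (σ (rankOne e e)).1 := by
  have hadj : (rankOne e x).1 = adjoint (rankOne x e).1 := by
    rw [coe_rankOne, coe_rankOne, adjoint_rankOne]
  have hcomp : (rankOne (⟪x, y⟫ • e) e).1 = (rankOne e x).1 ∘L (rankOne y e).1 := by
    rw [coe_rankOne, coe_rankOne, coe_rankOne, rankOne_comp_rankOne, _root_.map_smul]; rfl
  rw [← hσ.map_adjoint hadj, ← hσ.map_comp hcomp, hσ.map_rankOne_smul]

theorem isIdempotentElem_map_rankOne_self (hσ : IsConjLinearStarHom σ) {e : H} (he : ‖e‖ = 1) :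
    IsIdempotentElem (σ (rankOne e e)).1 :=
  (hσ.map_comp (isIdempotentElem_rankOne_self (𝕜 := ℂ) he).symm).symm

theorem map_rankOne_self_ne_zero (hσ : IsConjLinearStarHom σ) (hinj : Injective σ) {e : H}
    (he : e ≠ 0) : (σ (rankOne e e)).1 ≠ 0 :=
  fun h => rankOne_ne_zero he he (hσ.eq_zero_of_map_eq_zero hinj h)

end IsConjLinearStarHom

noncomputable def implementer (σ : CompactOp H → CompactOp H) (e f x : H) : H :=
  (σ (rankOne x e)).1 f

variable {σ : CompactOp H → CompactOp H} {e f : H}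

theorem map_apply_implementer (hσ : IsConjLinearStarHom σ) (T : CompactOp H) (x : H) :
    (σ T).1 (implementer σ e f x) = implementer σ e f (T.1 x) :=
  congr($(hσ.comp_map_rankOne T x e) f)

theorem implementer_add (hσ : IsConjLinearStarHom σ) (x y : H) :
    implementer σ e f (x + y) = implementer σ e f x + implementer σ e f y :=
  congr($(hσ.map_rankOne_add x y e) f)

theorem implementer_smul (hσ : IsConjLinearStarHom σ) (c : ℂ) (x : H) :
    implementer σ e f (c • x) = starRingEnd ℂ c • implementer σ e f x :=
  congr($(hσ.map_rankOne_smul c x e) f)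

theorem inner_implementer (hσ : IsConjLinearStarHom σ) (hf : ‖f‖ = 1)
    (hqf : (σ (rankOne e e)).1 f = f) (x y : H) :
    ⟪implementer σ e f x, implementer σ e f y⟫ = ⟪y, x⟫ :=
  calc ⟪(σ (rankOne x e)).1 f, (σ (rankOne y e)).1 f⟫
      = ⟪f, (adjoint (σ (rankOne x e)).1 ∘L (σ (rankOne y e)).1) f⟫ :=
        (adjoint_inner_right _ _ _).symm
    _ = ⟪y, x⟫ := by
        rw [hσ.adjoint_map_rankOne_comp, smul_apply, hqf, inner_smul_right,
          inner_self_eq_norm_sq_to_K, hf]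
        simp

theorem implementer_surjective (hσ : IsConjLinearStarHom σ) (hsurj : Surjective σ)
    (hf : ‖f‖ = 1) (hqf : (σ (rankOne e e)).1 f = f) : Surjective (implementer σ e f) := by
  intro y
  obtain ⟨T, hT⟩ := hsurj (rankOne y f)
  refine ⟨T.1 e, ?_⟩
  rw [← map_apply_implementer hσ, implementer, hqf, hT]
  simp [inner_self_eq_norm_sq_to_K, hf]

end CompactOp

open CompactOp in
/-- Every conjugate-linear `*`-algebra automorphism `σ` of the algebra
`K(H)` of compact operators on a complex Hilbert space `H` is implemented by an
antiunitary: there is an antiunitary `J` (with inverse `Jinv`) such that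
`σ T = J ∘ T ∘ J⁻¹` for every compact operator `T`. -/
theorem stmt_6 {H : Type*} [NormedAddCommGroup H] [InnerProductSpace ℂ H] [CompleteSpace H]
    (σ : CompactOp H → CompactOp H)
    (hbij : Function.Bijective σ)
    (haddσ : ∀ (T S : CompactOp H) (h : IsCompactOperator (T.1 + S.1)),
      (σ ⟨T.1 + S.1, h⟩).1 = (σ T).1 + (σ S).1)
    (hsmulσ : ∀ (c : ℂ) (T : CompactOp H) (h : IsCompactOperator (c • T.1)),
      (σ ⟨c • T.1, h⟩).1 = (starRingEnd ℂ c) • (σ T).1)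
    (hmulσ : ∀ (T S : CompactOp H) (h : IsCompactOperator (T.1.comp S.1)),
      (σ ⟨T.1.comp S.1, h⟩).1 = (σ T).1.comp (σ S).1)
    (hstarσ : ∀ (T : CompactOp H) (h : IsCompactOperator (ContinuousLinearMap.adjoint T.1)),
      (σ ⟨ContinuousLinearMap.adjoint T.1, h⟩).1 = ContinuousLinearMap.adjoint (σ T).1) :
    ∃ J Jinv : H → H,
      Function.LeftInverse Jinv J ∧ Function.RightInverse Jinv J ∧
      (∀ x y : H, J (x + y) = J x + J y) ∧
      (∀ (c : ℂ) (x : H), J (c • x) = (starRingEnd ℂ c) • J x) ∧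
      (∀ x y : H, ⟪J x, J y⟫ = ⟪y, x⟫) ∧
      (∀ (T : CompactOp H) (x : H), (σ T).1 x = J (T.1 (Jinv x))) := by
  rcases subsingleton_or_nontrivial H with _ | _
  · exact ⟨id, id, fun _ => rfl, fun _ => rfl, fun _ _ => Subsingleton.elim _ _,
      fun _ _ => Subsingleton.elim _ _, fun x y => by rw [Subsingleton.elim x y]; rfl,
      fun _ _ => Subsingleton.elim _ _⟩
  have hσ : IsConjLinearStarHom σ :=
    { map_add := fun {T S} ⟨U, hU⟩ h => by obtain rfl : U = _ := h; exact haddσ T S hU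
      map_smul := fun c {T} ⟨U, hU⟩ h => by obtain rfl : U = _ := h; exact hsmulσ c T hU
      map_comp := fun {T S} ⟨U, hU⟩ h => by obtain rfl : U = _ := h; exact hmulσ T S hU
      map_adjoint := fun {T} ⟨U, hU⟩ h => by obtain rfl : U = _ := h; exact hstarσ T hU }
  obtain ⟨e, he⟩ := exists_norm_eq H zero_le_one
  obtain ⟨f, hf, hqf⟩ := exists_norm_eq_one_apply_eq_self_of_isIdempotentElem
    (hσ.isIdempotentElem_map_rankOne_self he)
    (hσ.map_rankOne_self_ne_zero hbij.1 (norm_ne_zero_iff.mp (he ▸ one_ne_zero)))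
  have hJ : Bijective (implementer σ e f) :=
    ⟨injective_of_inner_map_map_swap (inner_implementer hσ hf hqf),
      implementer_surjective hσ hbij.2 hf hqf⟩
  refine ⟨_, _, leftInverse_surjInv hJ, rightInverse_surjInv hJ.2,
    implementer_add hσ, implementer_smul hσ, inner_implementer hσ hf hqf, fun T x => ?_⟩
  rw [← map_apply_implementer hσ, surjInv_eq hJ.2]
end

section
/- Let H be a complex Hilbert space and J an antiunitary on H with J ∘ J = id. Then there exists a Hilbert basis (orthonormal basis) (e_i)_{i ∈ ι} of H each of whose vectors is fixed by J, i.e., J (e_i) = e_i for all i. Consequently, with respect to such a basis J acts as coordinatewise complex conjugation: J(∑ᵢ cᵢ • eᵢ) = ∑ᵢ (conj cᵢ) • eᵢ. -/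
open scoped ComplexInnerProductSpace

universe u

/-!
Zorn's lemma gives an orthonormal family `s` of `J`-fixed vectors that is maximal among such
families. Its span is dense: the orthogonal complement `K` of `s` is `J`-invariant, because
`⟪e, J x⟫ = conj ⟪e, x⟫` for fixed `e`, and a nonzero `x ∈ K` yields the nonzero fixed vector
`x + J x` or, if that vanishes, `i • x`; normalised, it would enlarge `s`. In a basis of fixed
vectors the same identity `⟪e, J x⟫ = conj ⟪e, x⟫` says that `J` conjugates coordinates.
-/

open Submodule

section InnerProductSpace

variable {𝕜 E : Type*} [RCLike 𝕜] [NormedAddCommGroup E] [InnerProductSpace 𝕜 E]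

theorem exists_maximal_orthonormal_subset (t : Set E) :
    ∃ s ⊆ t, Orthonormal 𝕜 ((↑) : s → E) ∧
      ∀ w ⊆ t, s ⊆ w → Orthonormal 𝕜 ((↑) : w → E) → w = s := by
  obtain ⟨s, hs⟩ := zorn_subset {s | s ⊆ t ∧ Orthonormal 𝕜 ((↑) : s → E)} fun c hc hchain =>
    ⟨⋃₀ c, ⟨Set.sUnion_subset fun a ha => (hc ha).1,
      orthonormal_sUnion_of_directed hchain.directedOn fun a ha => (hc ha).2⟩,
      fun _ => Set.subset_sUnion_of_mem⟩
  exact ⟨s, hs.1.1, hs.1.2, fun w hwt hsw hw => hs.eq_of_ge ⟨hwt, hw⟩ hsw⟩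

theorem Orthonormal.insert_of_mem_orthogonal {s : Set E} (hs : Orthonormal 𝕜 ((↑) : s → E))
    {e : E} (he : ‖e‖ = 1) (hes : e ∈ (span 𝕜 s)ᗮ) :
    Orthonormal 𝕜 ((↑) : ↥(insert e s) → E) := by
  classical
  have hse : ∀ v ∈ s, inner 𝕜 v e = 0 := fun v hv =>
    inner_right_of_mem_orthogonal (subset_span hv) hes
  have he_notMem : e ∉ s := fun h => by simpa [he] using hse e h
  rw [orthonormal_subtype_iff_ite] at hs ⊢
  rintro v (rfl | hv) w (rfl | hw)
  · simp [he]
  · rw [if_neg (ne_of_mem_of_not_mem hw he_notMem).symm, inner_eq_zero_symm, hse w hw]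
  · rw [if_neg (ne_of_mem_of_not_mem hv he_notMem), hse v hv]
  · exact hs v hv w hw

theorem Submodule.mem_orthogonal_span_iff {s : Set E} {x : E} :
    x ∈ (span 𝕜 s)ᗮ ↔ ∀ e ∈ s, inner 𝕜 e x = 0 := by
  refine ⟨fun hx e he => inner_right_of_mem_orthogonal (subset_span he) hx, fun h => ?_⟩
  have hs : span 𝕜 s ≤ (𝕜 ∙ x)ᗮ :=
    span_le.2 fun e he => mem_orthogonal_singleton_iff_inner_left.2 (h e he)
  exact (isOrtho_iff_le.2 hs).symm.le (mem_span_singleton_self x)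

end InnerProductSpace

section Antiunitary

open Function

variable {H : Type*} [NormedAddCommGroup H] [InnerProductSpace ℂ H] {J : H → H}

theorem inner_apply_right_of_apply_eq_self (hinner : ∀ x y : H, ⟪J x, J y⟫ = ⟪y, x⟫)
    {e : H} (he : J e = e) (x : H) : ⟪e, J x⟫ = starRingEnd ℂ ⟪e, x⟫ := by
  rw [inner_conj_symm, ← hinner e x, he]

theorem apply_mem_orthogonal_span_of_subset_fixedPoints
    (hinner : ∀ x y : H, ⟪J x, J y⟫ = ⟪y, x⟫) {s : Set H} (hs : s ⊆ fixedPoints J) {x : H}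
    (hx : x ∈ (span ℂ s)ᗮ) : J x ∈ (span ℂ s)ᗮ := by
  rw [mem_orthogonal_span_iff] at hx ⊢
  intro e he
  rw [inner_apply_right_of_apply_eq_self hinner (hs he), hx e he, map_zero]

theorem exists_norm_eq_one_apply_eq_self_mem (hadd : ∀ x y : H, J (x + y) = J x + J y)
    (hconj : ∀ (c : ℂ) (x : H), J (c • x) = (starRingEnd ℂ c) • J x)
    (hinvol : ∀ x : H, J (J x) = x) {K : Submodule ℂ H} (hJK : ∀ x ∈ K, J x ∈ K) (hK : K ≠ ⊥) :
    ∃ e ∈ K, ‖e‖ = 1 ∧ J e = e := by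
  obtain ⟨x, hxK, hx0⟩ := K.ne_bot_iff.1 hK
  obtain ⟨y, hyK, hy0, hJy⟩ : ∃ y ∈ K, y ≠ 0 ∧ J y = y := by
    by_cases h : x + J x = 0
    · refine ⟨Complex.I • x, K.smul_mem _ hxK, smul_ne_zero Complex.I_ne_zero hx0, ?_⟩
      rw [hconj, eq_neg_of_add_eq_zero_right h, Complex.conj_I, neg_smul, smul_neg, neg_neg]
    · exact ⟨x + J x, K.add_mem hxK (hJK x hxK), h, by rw [hadd, hinvol, add_comm]⟩
  refine ⟨(‖y‖⁻¹ : ℂ) • y, K.smul_mem _ hyK, norm_smul_inv_norm hy0, ?_⟩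
  rw [hconj, hJy, ← Complex.ofReal_inv, Complex.conj_ofReal]

theorem orthogonal_span_eq_bot_of_maximal_orthonormal_fixedPoints
    (hadd : ∀ x y : H, J (x + y) = J x + J y)
    (hconj : ∀ (c : ℂ) (x : H), J (c • x) = (starRingEnd ℂ c) • J x)
    (hinner : ∀ x y : H, ⟪J x, J y⟫ = ⟪y, x⟫) (hinvol : ∀ x : H, J (J x) = x)
    {s : Set H} (hsJ : s ⊆ fixedPoints J) (hs : Orthonormal ℂ ((↑) : s → H))
    (hmax : ∀ u ⊆ fixedPoints J, s ⊆ u → Orthonormal ℂ ((↑) : u → H) → u = s) :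
    (span ℂ s)ᗮ = ⊥ := by
  by_contra hK
  obtain ⟨e, heK, he, hJe⟩ := exists_norm_eq_one_apply_eq_self_mem hadd hconj hinvol
    (fun x => apply_mem_orthogonal_span_of_subset_fixedPoints hinner hsJ) hK
  have hes : insert e s = s :=
    hmax _ (Set.insert_subset hJe hsJ) (Set.subset_insert e s) (hs.insert_of_mem_orthogonal he heK)
  have he0 : e ∈ span ℂ s ⊓ (span ℂ s)ᗮ := ⟨subset_span (hes ▸ Set.mem_insert e s), heK⟩
  rw [inf_orthogonal_eq_bot, mem_bot] at he0
  simp [he0] at he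

end Antiunitary

theorem stmt_9_general {H : Type u} [NormedAddCommGroup H] [InnerProductSpace ℂ H] [CompleteSpace H]
    (J : H → H)
    (hadd : ∀ x y : H, J (x + y) = J x + J y)
    (hconj : ∀ (c : ℂ) (x : H), J (c • x) = (starRingEnd ℂ c) • J x)
    (hinner : ∀ x y : H, ⟪J x, J y⟫ = ⟪y, x⟫)
    (hinvol : ∀ x : H, J (J x) = x) :
    ∃ (ι : Type u) (b : HilbertBasis ι ℂ H),
      (∀ i : ι, J (b i) = b i) ∧
      ∀ (x : H) (i : ι), b.repr (J x) i = starRingEnd ℂ (b.repr x i) := by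
  obtain ⟨s, hsJ, hs, hmax⟩ :=
    exists_maximal_orthonormal_subset (𝕜 := ℂ) (Function.fixedPoints J)
  have hsp : (span ℂ (Set.range ((↑) : s → H)))ᗮ = ⊥ := by
    rw [Subtype.range_coe]
    exact orthogonal_span_eq_bot_of_maximal_orthonormal_fixedPoints hadd hconj hinner hinvol
      hsJ hs hmax
  set b := HilbertBasis.mkOfOrthogonalEqBot hs hsp
  have hb : ∀ i, b i = i := by simp [b]
  refine ⟨s, b, fun i => hb i ▸ hsJ i.2, fun x i => ?_⟩
  rw [b.repr_apply_apply, b.repr_apply_apply, hb,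
    inner_apply_right_of_apply_eq_self hinner (hsJ i.2)]

/-- Let `H` be a complex Hilbert space and `J` an antiunitary on `H`
with `J ∘ J = id`.  Then there is a Hilbert (orthonormal) basis of `H` consisting of
vectors fixed by `J`; with respect to it `J` acts as coordinatewise complex
conjugation. -/
theorem stmt_9 {H : Type u} [NormedAddCommGroup H] [InnerProductSpace ℂ H] [CompleteSpace H]
    (J : H → H)
    (hbij : Function.Bijective J)
    (hadd : ∀ x y : H, J (x + y) = J x + J y)
    (hconj : ∀ (c : ℂ) (x : H), J (c • x) = (starRingEnd ℂ c) • J x)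
    (hinner : ∀ x y : H, ⟪J x, J y⟫ = ⟪y, x⟫)
    (hinvol : ∀ x : H, J (J x) = x) :
    ∃ (ι : Type u) (b : HilbertBasis ι ℂ H),
      (∀ i : ι, J (b i) = b i) ∧
      ∀ (x : H) (i : ι), b.repr (J x) i = starRingEnd ℂ (b.repr x i) :=
  stmt_9_general J hadd hconj hinner hinvol
end

section
/- Let H be a complex Hilbert space and J an antiunitary on H with J ∘ J = id, and let H_J := {x ∈ H | J x = x}, a real Hilbert space with the (real-valued) restriction of the inner product of H. Consider the Real structure σ_ℝ on K(H) given by σ_ℝ(T) := J ∘ T ∘ J, and its fixed-point real algebra F := {T ∈ K(H) | J ∘ T ∘ J = T}. Then every T ∈ F maps H_J into H_J, its restriction T|_{H_J} is a compact ℝ-linear operator on H_J, and the map T ↦ T|_{H_J} is an isomorphism of ℝ-algebras from F onto the ℝ-algebra of compact ℝ-linear operators on H_J; moreover this isomorphism preserves the operator norm and the adjoint. -/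
open scoped ComplexInnerProductSpace

set_option maxHeartbeats 1000000

/-- The real form `H_J = {x | J x = x}` of a complex Hilbert space `H` determined by an
involutive antiunitary `J`, as an `ℝ`-submodule of `H`. -/
def realForm {H : Type*} [NormedAddCommGroup H] [InnerProductSpace ℂ H] (J : H → H)
    (hadd : ∀ x y : H, J (x + y) = J x + J y)
    (hconj : ∀ (c : ℂ) (x : H), J (c • x) = (starRingEnd ℂ c) • J x) :
    Submodule ℝ H where
  carrier := {x : H | J x = x}
  add_mem' := by
    intro a b ha hb
    simp only [Set.mem_setOf_eq] at *
    rw [hadd, ha, hb]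
  zero_mem' := by
    have h := hconj 0 0
    simpa using h
  smul_mem' := by
    intro r a ha
    simp only [Set.mem_setOf_eq] at *
    rw [← algebraMap_smul ℂ r a, hconj]
    simp only [Complex.coe_algebraMap, Complex.conj_ofReal, ha]

/-- The fixed-point set `F` of the Real structure `σ_ℝ(T) = J ∘ T ∘ J` on the algebra
of compact operators of `H`, realized as a subtype. -/
abbrev FixedCompactOp (H : Type*) [NormedAddCommGroup H] [NormedSpace ℂ H]
    (J : H → H) : Type _ :=
  {T : H →L[ℂ] H // IsCompactOperator T ∧ ∀ x : H, J (T (J x)) = T x}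

set_option synthInstance.maxHeartbeats 400000

namespace Stmt11Aux

variable {H : Type*} [NormedAddCommGroup H] [InnerProductSpace ℂ H] {J : H → H}

theorem J_rsmul (hconj : ∀ (c : ℂ) (x : H), J (c • x) = (starRingEnd ℂ c) • J x)
    (r : ℝ) (x : H) : J (r • x) = r • J x := by
  rw [← algebraMap_smul ℂ r x, hconj]
  simp [Complex.conj_ofReal, algebraMap_smul]

theorem J_norm (hinner : ∀ x y : H, ⟪J x, J y⟫ = ⟪y, x⟫) (x : H) : ‖J x‖ = ‖x‖ := by
  have h : ⟪J x, J x⟫ = ⟪x, x⟫ := hinner x x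
  have h1 := @inner_self_eq_norm_sq_to_K ℂ H _ _ _ (J x)
  have h2 := @inner_self_eq_norm_sq_to_K ℂ H _ _ _ x
  rw [h1, h2] at h
  have : (‖J x‖:ℝ)^2 = ‖x‖^2 := by exact_mod_cast h
  nlinarith [norm_nonneg (J x), norm_nonneg x]

theorem J_sub (hadd : ∀ x y : H, J (x + y) = J x + J y) (x y : H) :
    J (x - y) = J x - J y := by
  have := hadd (x - y) y
  rw [sub_add_cancel] at this
  rw [eq_sub_iff_add_eq, ← this]

theorem J_cont (hadd : ∀ x y : H, J (x + y) = J x + J y)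
    (hinner : ∀ x y : H, ⟪J x, J y⟫ = ⟪y, x⟫) : Continuous J := by
  have : Isometry J := by
    intro x y
    simp only [edist_dist, dist_eq_norm]
    rw [← J_sub hadd, J_norm hinner]
  exact this.continuous

variable (hadd : ∀ x y : H, J (x + y) = J x + J y)
  (hconj : ∀ (c : ℂ) (x : H), J (c • x) = (starRingEnd ℂ c) • J x)
  (hinner : ∀ x y : H, ⟪J x, J y⟫ = ⟪y, x⟫)
  (hinvol : ∀ x : H, J (J x) = x)

set_option linter.unusedSectionVars false

include hadd hconj hinner hinvol

theorem realForm_isClosed :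
    IsClosed (realForm J hadd hconj : Set H) :=
  isClosed_eq (J_cont hadd hinner) continuous_id

theorem inner_real {u v : H} (hu : u ∈ realForm J hadd hconj)
    (hv : v ∈ realForm J hadd hconj) :
    (starRingEnd ℂ) ⟪u, v⟫ = ⟪u, v⟫ := by
  have h1 : ⟪u, v⟫ = ⟪v, u⟫ := by
    conv_lhs => rw [← (hu : J u = u), ← (hv : J v = v)]
    exact hinner u v
  rw [inner_conj_symm, ← h1]

theorem norm_add_I_smul {u v : H} (hu : u ∈ realForm J hadd hconj)
    (hv : v ∈ realForm J hadd hconj) :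
    ‖u + Complex.I • v‖ ^ 2 = ‖u‖ ^ 2 + ‖v‖ ^ 2 := by
  have h := @norm_add_sq ℂ H _ _ _ u (Complex.I • v)
  rw [inner_smul_right] at h
  have hre : ((⟪u, v⟫ : ℂ)).im = 0 :=
    Complex.conj_eq_iff_im.mp (inner_real hadd hconj hinner hinvol hu hv)
  have hz : RCLike.re (Complex.I * ⟪u, v⟫) = 0 := by
    simp [Complex.mul_re, hre]
  rw [hz] at h
  simpa [norm_smul] using h

noncomputable def reL : H →L[ℝ] (realForm J hadd hconj) :=
  LinearMap.mkContinuous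
    { toFun := fun x => ⟨(1/2 : ℝ) • (x + J x), by
        show J _ = _
        rw [J_rsmul hconj, hadd, hinvol, add_comm (J x) x]⟩
      map_add' := by
        intro x y
        ext
        show (1/2 : ℝ) • (x + y + J (x+y)) = (1/2:ℝ) • (x + J x) + (1/2:ℝ) • (y + J y)
        rw [hadd, ← smul_add]
        module
      map_smul' := by
        intro r x
        ext
        show (1/2 : ℝ) • (r • x + J (r • x)) = r • ((1/2:ℝ) • (x + J x))
        rw [J_rsmul hconj, ← smul_add, smul_comm] }
    1 (by
      intro x
      show ‖(1/2 : ℝ) • (x + J x)‖ ≤ 1 * ‖x‖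
      rw [norm_smul]
      calc ‖(1/2:ℝ)‖ * ‖x + J x‖ ≤ (1/2) * (‖x‖ + ‖J x‖) := by
            rw [Real.norm_eq_abs]
            gcongr
            · exact le_of_eq (abs_of_nonneg (by norm_num))
            · exact norm_add_le _ _
        _ = 1 * ‖x‖ := by rw [J_norm hinner]; ring)

@[simp] theorem reL_coe (x : H) :
    ((reL hadd hconj hinner hinvol x : H)) = (1/2 : ℝ) • (x + J x) := rfl

noncomputable def imL : H →L[ℝ] (realForm J hadd hconj) :=
  (reL hadd hconj hinner hinvol).comp
    (((-Complex.I) • ContinuousLinearMap.id ℂ H).restrictScalars ℝ)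

@[simp] theorem imL_coe (x : H) :
    ((imL hadd hconj hinner hinvol x : H)) =
      (1/2 : ℝ) • ((-Complex.I) • x + Complex.I • J x) := by
  show ((reL hadd hconj hinner hinvol ((-Complex.I) • x) : H)) = _
  rw [reL_coe, hconj]
  simp

theorem decomp (x : H) :
    ((reL hadd hconj hinner hinvol x : H)) +
      Complex.I • ((imL hadd hconj hinner hinvol x : H)) = x := by
  rw [reL_coe, imL_coe]
  match_scalars <;> (push_cast [Complex.I_sq]; try ring_nf) <;> try norm_num

theorem reL_J (x : H) : reL hadd hconj hinner hinvol (J x) = reL hadd hconj hinner hinvol x := by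
  ext
  rw [reL_coe, reL_coe, hinvol, add_comm]

theorem imL_J (x : H) : imL hadd hconj hinner hinvol (J x) = - imL hadd hconj hinner hinvol x := by
  ext
  show ((imL hadd hconj hinner hinvol (J x) : H)) = -(imL hadd hconj hinner hinvol x : H)
  rw [imL_coe, imL_coe, hinvol]
  match_scalars <;> (push_cast [Complex.I_sq]; try ring_nf) <;> try norm_num

theorem reL_I (x : H) :
    reL hadd hconj hinner hinvol (Complex.I • x) = - imL hadd hconj hinner hinvol x := by
  ext
  show ((reL hadd hconj hinner hinvol (Complex.I • x) : H)) = -(imL hadd hconj hinner hinvol x : H)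
  rw [reL_coe, imL_coe, hconj]
  match_scalars <;> (push_cast [Complex.I_sq]; try ring_nf) <;> try norm_num

theorem imL_I (x : H) :
    imL hadd hconj hinner hinvol (Complex.I • x) = reL hadd hconj hinner hinvol x := by
  ext
  show ((imL hadd hconj hinner hinvol (Complex.I • x) : H)) = (reL hadd hconj hinner hinvol x : H)
  rw [imL_coe, reL_coe, hconj]
  match_scalars <;> (push_cast [Complex.I_sq]; try ring_nf) <;> try norm_num

theorem reL_fix (a : realForm J hadd hconj) : reL hadd hconj hinner hinvol (a : H) = a := by
  ext
  rw [reL_coe, (a.2 : J (a:H) = a)]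
  module

theorem imL_fix (a : realForm J hadd hconj) : imL hadd hconj hinner hinvol (a : H) = 0 := by
  ext
  show ((imL hadd hconj hinner hinvol (a:H) : H)) = 0
  rw [imL_coe, (a.2 : J (a:H) = a)]
  match_scalars <;> (push_cast [Complex.I_sq]; try ring_nf) <;> try norm_num

theorem fixed_maps (T : H →L[ℂ] H) (hT : ∀ x : H, J (T (J x)) = T x)
    {u : H} (hu : u ∈ realForm J hadd hconj) : T u ∈ realForm J hadd hconj := by
  show J (T u) = T u
  conv_lhs => rw [← (hu : J u = u)]
  exact hT u

/-- restriction of a fixed operator to the real form -/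
noncomputable def restr (T : H →L[ℂ] H) (hT : ∀ x : H, J (T (J x)) = T x) :
    realForm J hadd hconj →L[ℝ] realForm J hadd hconj :=
  LinearMap.mkContinuous
    { toFun := fun a => ⟨T a, fixed_maps hadd hconj hinner hinvol T hT a.2⟩
      map_add' := fun a b => Subtype.ext (by simp)
      map_smul' := fun r a => Subtype.ext (by simp) }
    ‖T‖ (fun a => T.le_opNorm _)

@[simp] theorem restr_coe (T : H →L[ℂ] H) (hT : ∀ x : H, J (T (J x)) = T x)
    (a : realForm J hadd hconj) :
    ((restr hadd hconj hinner hinvol T hT a : H)) = T a := rfl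

theorem restr_compact (T : H →L[ℂ] H) (hTc : IsCompactOperator T)
    (hT : ∀ x : H, J (T (J x)) = T x) :
    IsCompactOperator (restr hadd hconj hinner hinvol T hT) := by
  have h1 : IsCompactOperator (⇑T ∘ ⇑(realForm J hadd hconj).subtypeL) :=
    hTc.comp_clm _
  have h2 := h1.codRestrict
    (fun a => fixed_maps hadd hconj hinner hinvol T hT a.2)
    (realForm_isClosed hadd hconj hinner hinvol)
  exact h2

theorem smul_decomp (c : ℂ) (y : H) :
    c • y = (c.re : ℝ) • y + (c.im : ℝ) • (Complex.I • y) := by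
  match_scalars
  push_cast
  simp [Complex.ext_iff]

section Ext

variable (S : realForm J hadd hconj →L[ℝ] realForm J hadd hconj)

/-- the complex-linear extension of an operator on the real form -/
noncomputable def extFun (x : H) : H :=
  ((S (reL hadd hconj hinner hinvol x) : H)) +
    Complex.I • ((S (imL hadd hconj hinner hinvol x) : H))

theorem extFun_add (x y : H) :
    extFun hadd hconj hinner hinvol S (x + y) =
      extFun hadd hconj hinner hinvol S x + extFun hadd hconj hinner hinvol S y := by
  unfold extFun
  simp only [map_add, Submodule.coe_add, smul_add]
  abel

theorem extFun_rsmul (r : ℝ) (x : H) :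
    extFun hadd hconj hinner hinvol S (r • x) = r • extFun hadd hconj hinner hinvol S x := by
  unfold extFun
  rw [map_smul, map_smul, map_smul, map_smul]
  rw [Submodule.coe_smul, Submodule.coe_smul, smul_add, smul_comm]

theorem extFun_I (x : H) :
    extFun hadd hconj hinner hinvol S (Complex.I • x) =
      Complex.I • extFun hadd hconj hinner hinvol S x := by
  unfold extFun
  rw [reL_I, imL_I, map_neg, Submodule.coe_neg, smul_add, smul_smul, Complex.I_mul_I,
    neg_one_smul]
  abel

theorem extFun_smul (c : ℂ) (x : H) :
    extFun hadd hconj hinner hinvol S (c • x) = c • extFun hadd hconj hinner hinvol S x := by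
  rw [smul_decomp hadd hconj hinner hinvol c x, extFun_add, extFun_rsmul, extFun_rsmul,
    extFun_I, ← smul_decomp hadd hconj hinner hinvol c]

theorem reL_norm_le (x : H) : ‖((reL hadd hconj hinner hinvol x : H))‖ ≤ ‖x‖ := by
  rw [reL_coe, norm_smul]
  calc ‖(1/2:ℝ)‖ * ‖x + J x‖ ≤ (1/2) * (‖x‖ + ‖J x‖) := by
        gcongr
        · exact le_of_eq (abs_of_nonneg (by norm_num))
        · exact norm_add_le _ _
    _ = ‖x‖ := by rw [J_norm hinner]; ring

theorem imL_norm_le (x : H) : ‖((imL hadd hconj hinner hinvol x : H))‖ ≤ ‖x‖ := by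
  have h : ((imL hadd hconj hinner hinvol x : H)) =
      ((reL hadd hconj hinner hinvol ((-Complex.I) • x) : H)) := rfl
  rw [h]
  calc ‖((reL hadd hconj hinner hinvol ((-Complex.I) • x) : H))‖ ≤ ‖(-Complex.I) • x‖ :=
        reL_norm_le hadd hconj hinner hinvol _
    _ = ‖x‖ := by rw [norm_smul]; simp

theorem extFun_bound (x : H) :
    ‖extFun hadd hconj hinner hinvol S x‖ ≤ (‖S‖ + ‖S‖) * ‖x‖ := by
  unfold extFun
  calc ‖((S (reL hadd hconj hinner hinvol x) : H)) +
        Complex.I • ((S (imL hadd hconj hinner hinvol x) : H))‖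
      ≤ ‖((S (reL hadd hconj hinner hinvol x) : H))‖ +
        ‖Complex.I • ((S (imL hadd hconj hinner hinvol x) : H))‖ := norm_add_le _ _
    _ = ‖S (reL hadd hconj hinner hinvol x)‖ + ‖S (imL hadd hconj hinner hinvol x)‖ := by
        rw [norm_smul]; simp
    _ ≤ ‖S‖ * ‖reL hadd hconj hinner hinvol x‖ + ‖S‖ * ‖imL hadd hconj hinner hinvol x‖ := by
        gcongr <;> exact S.le_opNorm _
    _ ≤ ‖S‖ * ‖x‖ + ‖S‖ * ‖x‖ := by
        gcongr
        · exact reL_norm_le hadd hconj hinner hinvol x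
        · exact imL_norm_le hadd hconj hinner hinvol x
    _ = (‖S‖ + ‖S‖) * ‖x‖ := by ring

noncomputable def extOp : H →L[ℂ] H :=
  LinearMap.mkContinuous
    { toFun := extFun hadd hconj hinner hinvol S
      map_add' := extFun_add hadd hconj hinner hinvol S
      map_smul' := extFun_smul hadd hconj hinner hinvol S }
    (‖S‖ + ‖S‖) (extFun_bound hadd hconj hinner hinvol S)

@[simp] theorem extOp_apply (x : H) :
    extOp hadd hconj hinner hinvol S x =
      ((S (reL hadd hconj hinner hinvol x) : H)) +
        Complex.I • ((S (imL hadd hconj hinner hinvol x) : H)) := rfl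

theorem extOp_fixed (x : H) :
    J (extOp hadd hconj hinner hinvol S (J x)) = extOp hadd hconj hinner hinvol S x := by
  rw [extOp_apply, extOp_apply, reL_J, imL_J, map_neg]
  rw [Submodule.coe_neg, smul_neg, ← sub_eq_add_neg, J_sub hadd, hconj]
  rw [((S (reL hadd hconj hinner hinvol x)).2 :
    J ((S (reL hadd hconj hinner hinvol x) : H)) = _)]
  rw [((S (imL hadd hconj hinner hinvol x)).2 :
    J ((S (imL hadd hconj hinner hinvol x) : H)) = _)]
  simp [sub_eq_add_neg]

theorem extOp_compact (hS : IsCompactOperator S) :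
    IsCompactOperator (extOp hadd hconj hinner hinvol S) := by
  have hA : IsCompactOperator
      ((Subtype.val ∘ ⇑S) ∘ ⇑(reL hadd hconj hinner hinvol)) :=
    (hS.continuous_comp continuous_subtype_val).comp_clm _
  have hB0 : IsCompactOperator
      ((Subtype.val ∘ ⇑S) ∘ ⇑(imL hadd hconj hinner hinvol)) :=
    (hS.continuous_comp continuous_subtype_val).comp_clm _
  have hB : IsCompactOperator
      ((fun y : H => Complex.I • y) ∘ ((Subtype.val ∘ ⇑S) ∘ ⇑(imL hadd hconj hinner hinvol))) :=
    hB0.continuous_comp (continuous_const_smul _)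
  have := hA.add hB
  exact this

theorem extOp_restr (a : realForm J hadd hconj) :
    extOp hadd hconj hinner hinvol S (a : H) = (S a : H) := by
  rw [extOp_apply, reL_fix, imL_fix, map_zero]
  simp

end Ext

/-- reconstruction of a fixed operator from its restriction -/
theorem fixed_ext (T : H →L[ℂ] H) (x : H) :
    T x = T ((reL hadd hconj hinner hinvol x : H)) +
      Complex.I • T ((imL hadd hconj hinner hinvol x : H)) := by
  conv_lhs => rw [← decomp hadd hconj hinner hinvol x]
  rw [map_add, map_smul]

theorem restr_norm (T : H →L[ℂ] H) (hT : ∀ x : H, J (T (J x)) = T x) :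
    ‖restr hadd hconj hinner hinvol T hT‖ = ‖T‖ := by
  apply le_antisymm
  · exact LinearMap.mkContinuous_norm_le _ (norm_nonneg T) _
  · refine ContinuousLinearMap.opNorm_le_bound T (ContinuousLinearMap.opNorm_nonneg _) fun x => ?_
    set R := restr hadd hconj hinner hinvol T hT
    set u := reL hadd hconj hinner hinvol x
    set v := imL hadd hconj hinner hinvol x
    have hx2 : ‖x‖^2 = ‖(u:H)‖^2 + ‖(v:H)‖^2 := by
      conv_lhs => rw [← decomp hadd hconj hinner hinvol x]
      exact norm_add_I_smul hadd hconj hinner hinvol u.2 v.2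
    have hT2 : ‖T x‖^2 = ‖T (u:H)‖^2 + ‖T (v:H)‖^2 := by
      conv_lhs => rw [fixed_ext hadd hconj hinner hinvol T x]
      exact norm_add_I_smul hadd hconj hinner hinvol
        (fixed_maps hadd hconj hinner hinvol T hT u.2)
        (fixed_maps hadd hconj hinner hinvol T hT v.2)
    have hu : ‖T (u:H)‖ ≤ ‖R‖ * ‖(u:H)‖ := R.le_opNorm u
    have hv : ‖T (v:H)‖ ≤ ‖R‖ * ‖(v:H)‖ := R.le_opNorm v
    have hR : (0:ℝ) ≤ ‖R‖ := ContinuousLinearMap.opNorm_nonneg _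
    have h1 : ‖T (u:H)‖^2 ≤ (‖R‖ * ‖(u:H)‖)^2 := pow_le_pow_left₀ (norm_nonneg _) hu 2
    have h2 : ‖T (v:H)‖^2 ≤ (‖R‖ * ‖(v:H)‖)^2 := pow_le_pow_left₀ (norm_nonneg _) hv 2
    have h3 : ‖T x‖^2 ≤ (‖R‖ * ‖x‖)^2 := by
      have he : (‖R‖*‖x‖)^2 = (‖R‖*‖(u:H)‖)^2 + (‖R‖*‖(v:H)‖)^2 := by
        rw [mul_pow, mul_pow, mul_pow, hx2]; ring
      rw [hT2, he]; exact add_le_add h1 h2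
    nlinarith [norm_nonneg (T x), mul_nonneg hR (norm_nonneg x), h3]

end Stmt11Aux

open Stmt11Aux

/-- Let `J` be an involutive antiunitary on a complex Hilbert space
`H`, with real form `H_J`, and let `F` be the fixed-point real algebra of the Real
structure `σ_ℝ(T) = J ∘ T ∘ J` on `K(H)`.  Then every `T ∈ F` restricts to a compact
`ℝ`-linear operator on `H_J`, and `T ↦ T|_{H_J}` is an `ℝ`-algebra isomorphism from `F`
onto the compact `ℝ`-linear operators on `H_J`, preserving the operator norm and the
adjoint. -/
theorem stmt_11 {H : Type*} [NormedAddCommGroup H] [InnerProductSpace ℂ H] [CompleteSpace H]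
    (J : H → H)
    (hbij : Function.Bijective J)
    (hadd : ∀ x y : H, J (x + y) = J x + J y)
    (hconj : ∀ (c : ℂ) (x : H), J (c • x) = (starRingEnd ℂ c) • J x)
    (hinner : ∀ x y : H, ⟪J x, J y⟫ = ⟪y, x⟫)
    (hinvol : ∀ x : H, J (J x) = x) :
    (∀ T : H →L[ℂ] H, IsCompactOperator T → (∀ x : H, J (T (J x)) = T x) →
      ∀ x : H, x ∈ realForm J hadd hconj → T x ∈ realForm J hadd hconj) ∧
    ∃ Ψ : FixedCompactOp H J →
        {T' : ↥(realForm J hadd hconj) →L[ℝ] ↥(realForm J hadd hconj) //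
          IsCompactOperator T'},
      (∀ (T : FixedCompactOp H J) (a : ↥(realForm J hadd hconj)),
        ((Ψ T).1 a : H) = T.1 (a : H)) ∧
      Function.Bijective Ψ ∧
      (∀ (T₁ T₂ : FixedCompactOp H J) (h : IsCompactOperator (T₁.1 + T₂.1) ∧
          ∀ x : H, J ((T₁.1 + T₂.1) (J x)) = (T₁.1 + T₂.1) x),
        (Ψ ⟨T₁.1 + T₂.1, h⟩).1 = (Ψ T₁).1 + (Ψ T₂).1) ∧
      (∀ (r : ℝ) (T : FixedCompactOp H J) (h : IsCompactOperator (r • T.1) ∧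
          ∀ x : H, J ((r • T.1) (J x)) = (r • T.1) x),
        (Ψ ⟨r • T.1, h⟩).1 = r • (Ψ T).1) ∧
      (∀ (T₁ T₂ : FixedCompactOp H J) (h : IsCompactOperator (T₁.1.comp T₂.1) ∧
          ∀ x : H, J ((T₁.1.comp T₂.1) (J x)) = (T₁.1.comp T₂.1) x),
        (Ψ ⟨T₁.1.comp T₂.1, h⟩).1 = (Ψ T₁).1.comp (Ψ T₂).1) ∧
      (∀ T : FixedCompactOp H J, ‖(Ψ T).1‖ = ‖T.1‖) ∧
      (∀ (T : FixedCompactOp H J)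
        (h : IsCompactOperator (ContinuousLinearMap.adjoint T.1) ∧
          ∀ x : H, J ((ContinuousLinearMap.adjoint T.1) (J x)) =
            (ContinuousLinearMap.adjoint T.1) x)
        (a b : ↥(realForm J hadd hconj)),
        ⟪((Ψ ⟨ContinuousLinearMap.adjoint T.1, h⟩).1 a : H), (b : H)⟫ =
          ⟪(a : H), ((Ψ T).1 b : H)⟫) := by
  refine ⟨fun T _ hT x hx => fixed_maps hadd hconj hinner hinvol T hT hx, ?_⟩
  refine ⟨fun T => ⟨restr hadd hconj hinner hinvol T.1 T.2.2,
    restr_compact hadd hconj hinner hinvol T.1 T.2.1 T.2.2⟩, fun T a => rfl, ⟨?_, ?_⟩,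
    ?_, ?_, ?_, ?_, ?_⟩
  · -- injective
    intro T₁ T₂ h
    have h1 : ∀ a : realForm J hadd hconj, T₁.1 (a : H) = T₂.1 (a : H) := by
      intro a
      have := congrArg (fun R => ((R.1 a : H))) h
      simpa using this
    apply Subtype.ext
    apply ContinuousLinearMap.ext
    intro x
    rw [fixed_ext hadd hconj hinner hinvol T₁.1 x, fixed_ext hadd hconj hinner hinvol T₂.1 x,
      h1, h1]
  · -- surjective
    rintro ⟨S, hS⟩
    refine ⟨⟨extOp hadd hconj hinner hinvol S,
      extOp_compact hadd hconj hinner hinvol S hS, extOp_fixed hadd hconj hinner hinvol S⟩, ?_⟩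
    apply Subtype.ext
    apply ContinuousLinearMap.ext
    intro a
    apply Subtype.ext
    show extOp hadd hconj hinner hinvol S (a : H) = (S a : H)
    exact extOp_restr hadd hconj hinner hinvol S a
  · intro T₁ T₂ h
    apply ContinuousLinearMap.ext
    intro a
    apply Subtype.ext
    rfl
  · intro r T h
    apply ContinuousLinearMap.ext
    intro a
    apply Subtype.ext
    rfl
  · intro T₁ T₂ h
    apply ContinuousLinearMap.ext
    intro a
    apply Subtype.ext
    rfl
  · intro T
    exact restr_norm hadd hconj hinner hinvol T.1 T.2.2
  · intro T h a b
    show ⟪ContinuousLinearMap.adjoint T.1 (a : H), (b : H)⟫ = ⟪(a : H), T.1 (b : H)⟫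
    exact ContinuousLinearMap.adjoint_inner_left T.1 (b : H) (a : H)
end

section
/- Let H be a complex Hilbert space and A := K(H) the complex *-algebra of compact operators on H. Equip A × A with the coordinatewise *-algebra structure and with the flip map G : A × A → A × A, G(a, b) := (b, a) (the grading automorphism of the standard odd grading). Suppose τ : A × A → A × A is additive, conjugate-linear, multiplicative, star-preserving, bijective, satisfies τ ∘ τ = id, and commutes with the flip: τ ∘ G = G ∘ τ. Then there exists a Real structure σ on A such that either τ(a, b) = (σ a, σ b) for all (a, b) ∈ A × A (τ is even), or τ(a, b) = (σ b, σ a) for all (a, b) ∈ A × A (τ is odd). -/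
def IsPrimeRing (R : Type*) [Mul R] [Zero R] : Prop :=
  ∀ a b : R, (∀ c, a * c * b = 0) → a = 0 ∨ b = 0

theorem NonUnitalRingHom.exists_eq_prodMap_or_eq_swap {R : Type*} [NonUnitalNonAssocSemiring R]
    (hR : IsPrimeRing R) (τ : R × R →ₙ+* R × R) (hτ : Function.Surjective τ)
    (hswap : ∀ p, τ p.swap = (τ p).swap) :
    ∃ σ : R → R, (∀ p, τ p = (σ p.1, σ p.2)) ∨ (∀ p, τ p = (σ p.2, σ p.1)) := by
  set f : R → R := fun a => (τ (a, 0)).1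
  set g : R → R := fun a => (τ (a, 0)).2
  have hτ_right (b : R) : τ (0, b) = (g b, f b) := hswap (b, 0)
  have hτ_eq (a b : R) : τ (a, b) = (f a + g b, g a + f b) := by
    rw [show (a, b) = (a, 0) + (0, b) by simp, map_add, hτ_right]
    rfl
  have hfg (a b : R) : f a * g b = 0 := by
    have h := map_mul τ (a, 0) (0, b)
    rw [show ((a, 0) * (0, b) : R × R) = 0 by ext <;> simp, map_zero, hτ_right] at h
    exact (congrArg Prod.fst h).symm
  have hf_mul (a c : R) : ∃ x, f x = f a * c := by
    obtain ⟨p, hp⟩ := hτ (c, 0)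
    refine ⟨a * p.1, ?_⟩
    have h := map_mul τ (a, 0) p
    rw [show ((a, 0) * p : R × R) = (a * p.1, 0) by ext <;> simp, hp] at h
    exact congrArg Prod.fst h
  have hfg_zero : (∀ a, f a = 0) ∨ (∀ b, g b = 0) := by
    by_contra! ⟨⟨a, ha⟩, ⟨b, hb⟩⟩
    refine (hR (f a) (g b) fun c => ?_).elim ha hb
    obtain ⟨x, hx⟩ := hf_mul a c
    rw [← hx, hfg]
  rcases hfg_zero with hf | hg
  · exact ⟨g, Or.inr fun p => by simp [hτ_eq, hf]⟩
  · exact ⟨f, Or.inl fun p => by simp [hτ_eq, hg]⟩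

theorem ContinuousLinearMap.exists_isCompactOperator_comp_comp_ne_zero {𝕜 E F G : Type*}
    [RCLike 𝕜] [NormedAddCommGroup E] [NormedSpace 𝕜 E] [NormedAddCommGroup F] [NormedSpace 𝕜 F]
    [NormedAddCommGroup G] [NormedSpace 𝕜 G] {S : F →L[𝕜] G} {T : E →L[𝕜] F}
    (hS : S ≠ 0) (hT : T ≠ 0) :
    ∃ C : F →L[𝕜] F, IsCompactOperator C ∧ S ∘L C ∘L T ≠ 0 := by
  obtain ⟨v, hv⟩ := exists_ne_zero hS
  obtain ⟨w, hw⟩ := exists_ne_zero hT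
  obtain ⟨ℓ, hℓ⟩ := SeparatingDual.exists_ne_zero (R := 𝕜) hw
  refine ⟨ℓ.smulRight v, (isCompactOperator_of_locallyCompactSpace_dom ℓ).clm_comp
    (toSpanSingleton 𝕜 v), fun h => ?_⟩
  have hw' := congrArg (· w) h
  simp only [comp_apply, smulRight_apply, map_smul, zero_apply] at hw'
  exact (smul_ne_zero hℓ hv) hw'

section CompactOp

variable (H : Type*) [NormedAddCommGroup H] [NormedSpace ℂ H]

def compactOperators : NonUnitalSubring (H →L[ℂ] H) where
  carrier := {T | IsCompactOperator T}
  add_mem' := IsCompactOperator.add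
  zero_mem' := isCompactOperator_zero
  neg_mem' := IsCompactOperator.neg
  mul_mem' := fun {a _} _ hb => hb.clm_comp a

instance : NonUnitalRing (CompactOp H) := inferInstanceAs (NonUnitalRing (compactOperators H))

theorem isPrimeRing_compactOp : IsPrimeRing (CompactOp H) := by
  intro a b hab
  by_contra! ⟨ha, hb⟩
  obtain ⟨C, hC, hne⟩ := ContinuousLinearMap.exists_isCompactOperator_comp_comp_ne_zero
    (fun h => ha (Subtype.ext h)) (fun h => hb (Subtype.ext h))
  apply hne
  rw [← ContinuousLinearMap.comp_assoc]
  exact congrArg Subtype.val (hab ⟨C, hC⟩)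

end CompactOp

theorem stmt_12_general {H : Type*} [NormedAddCommGroup H] [InnerProductSpace ℂ H] [CompleteSpace H]
    (τ : CompactOp H × CompactOp H → CompactOp H × CompactOp H)
    (haddτ : ∀ (p q : CompactOp H × CompactOp H)
      (h1 : IsCompactOperator (p.1.1 + q.1.1)) (h2 : IsCompactOperator (p.2.1 + q.2.1)),
      (τ (⟨p.1.1 + q.1.1, h1⟩, ⟨p.2.1 + q.2.1, h2⟩)).1.1 = (τ p).1.1 + (τ q).1.1 ∧
      (τ (⟨p.1.1 + q.1.1, h1⟩, ⟨p.2.1 + q.2.1, h2⟩)).2.1 = (τ p).2.1 + (τ q).2.1)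
    (hsmulτ : ∀ (c : ℂ) (p : CompactOp H × CompactOp H)
      (h1 : IsCompactOperator (c • p.1.1)) (h2 : IsCompactOperator (c • p.2.1)),
      (τ (⟨c • p.1.1, h1⟩, ⟨c • p.2.1, h2⟩)).1.1 = (starRingEnd ℂ c) • (τ p).1.1 ∧
      (τ (⟨c • p.1.1, h1⟩, ⟨c • p.2.1, h2⟩)).2.1 = (starRingEnd ℂ c) • (τ p).2.1)
    (hmulτ : ∀ (p q : CompactOp H × CompactOp H)
      (h1 : IsCompactOperator (p.1.1.comp q.1.1)) (h2 : IsCompactOperator (p.2.1.comp q.2.1)),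
      (τ (⟨p.1.1.comp q.1.1, h1⟩, ⟨p.2.1.comp q.2.1, h2⟩)).1.1 = (τ p).1.1.comp (τ q).1.1 ∧
      (τ (⟨p.1.1.comp q.1.1, h1⟩, ⟨p.2.1.comp q.2.1, h2⟩)).2.1 = (τ p).2.1.comp (τ q).2.1)
    (hstarτ : ∀ (p : CompactOp H × CompactOp H)
      (h1 : IsCompactOperator (ContinuousLinearMap.adjoint p.1.1))
      (h2 : IsCompactOperator (ContinuousLinearMap.adjoint p.2.1)),
      (τ (⟨ContinuousLinearMap.adjoint p.1.1, h1⟩,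
          ⟨ContinuousLinearMap.adjoint p.2.1, h2⟩)).1.1 =
        ContinuousLinearMap.adjoint (τ p).1.1 ∧
      (τ (⟨ContinuousLinearMap.adjoint p.1.1, h1⟩,
          ⟨ContinuousLinearMap.adjoint p.2.1, h2⟩)).2.1 =
        ContinuousLinearMap.adjoint (τ p).2.1)
    (hinvol : ∀ p : CompactOp H × CompactOp H, τ (τ p) = p)
    (hflip : ∀ p : CompactOp H × CompactOp H, τ (p.2, p.1) = ((τ p).2, (τ p).1)) :
    ∃ σ : CompactOp H → CompactOp H,
      Function.Bijective σ ∧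
      (∀ (T S : CompactOp H) (h : IsCompactOperator (T.1 + S.1)),
        (σ ⟨T.1 + S.1, h⟩).1 = (σ T).1 + (σ S).1) ∧
      (∀ (c : ℂ) (T : CompactOp H) (h : IsCompactOperator (c • T.1)),
        (σ ⟨c • T.1, h⟩).1 = (starRingEnd ℂ c) • (σ T).1) ∧
      (∀ (T S : CompactOp H) (h : IsCompactOperator (T.1.comp S.1)),
        (σ ⟨T.1.comp S.1, h⟩).1 = (σ T).1.comp (σ S).1) ∧
      (∀ (T : CompactOp H) (h : IsCompactOperator (ContinuousLinearMap.adjoint T.1)),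
        (σ ⟨ContinuousLinearMap.adjoint T.1, h⟩).1 = ContinuousLinearMap.adjoint (σ T).1) ∧
      (∀ T : CompactOp H, σ (σ T) = T) ∧
      ((∀ p : CompactOp H × CompactOp H, τ p = (σ p.1, σ p.2)) ∨
       (∀ p : CompactOp H × CompactOp H, τ p = (σ p.2, σ p.1))) := by
  have hadd (p q : CompactOp H × CompactOp H) : τ (p + q) = τ p + τ q :=
    Prod.ext (Subtype.ext (haddτ p q _ _).1) (Subtype.ext (haddτ p q _ _).2)
  have hmul (p q : CompactOp H × CompactOp H) : τ (p * q) = τ p * τ q :=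
    Prod.ext (Subtype.ext (hmulτ p q _ _).1) (Subtype.ext (hmulτ p q _ _).2)
  obtain ⟨σ, hσ⟩ := NonUnitalRingHom.exists_eq_prodMap_or_eq_swap (isPrimeRing_compactOp H)
    { AddMonoidHom.mk' τ hadd with map_mul' := hmul } (Function.Involutive.surjective hinvol) hflip
  have hdiag (T : CompactOp H) : τ (T, T) = (σ T, σ T) := by
    rcases hσ with h | h <;> exact h (T, T)
  have hσσ : Function.Involutive σ := fun T => by
    simpa only [hdiag, Prod.mk.injEq, and_self] using hinvol (T, T)
  refine ⟨σ, hσσ.bijective, fun T S h => ?_, fun c T h => ?_, fun T S h => ?_, fun T h => ?_,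
    hσσ, hσ⟩
  · simpa only [hdiag] using (haddτ (T, T) (S, S) h h).1
  · simpa only [hdiag] using (hsmulτ c (T, T) h h).1
  · simpa only [hdiag] using (hmulτ (T, T) (S, S) h h).1
  · simpa only [hdiag] using (hstarτ (T, T) h h).1

/-- Let `A = K(H)` and equip `A × A` with the coordinatewise
`*`-algebra structure and the flip (the grading automorphism of the standard odd
grading).  Any Real structure `τ` on `A × A` commuting with the flip is either even,
`τ(a, b) = (σ a, σ b)`, or odd, `τ(a, b) = (σ b, σ a)`, for a Real structure `σ`
on `A`. -/
theorem stmt_12 {H : Type*} [NormedAddCommGroup H] [InnerProductSpace ℂ H] [CompleteSpace H]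
    (τ : CompactOp H × CompactOp H → CompactOp H × CompactOp H)
    (hbij : Function.Bijective τ)
    (haddτ : ∀ (p q : CompactOp H × CompactOp H)
      (h1 : IsCompactOperator (p.1.1 + q.1.1)) (h2 : IsCompactOperator (p.2.1 + q.2.1)),
      (τ (⟨p.1.1 + q.1.1, h1⟩, ⟨p.2.1 + q.2.1, h2⟩)).1.1 = (τ p).1.1 + (τ q).1.1 ∧
      (τ (⟨p.1.1 + q.1.1, h1⟩, ⟨p.2.1 + q.2.1, h2⟩)).2.1 = (τ p).2.1 + (τ q).2.1)
    (hsmulτ : ∀ (c : ℂ) (p : CompactOp H × CompactOp H)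
      (h1 : IsCompactOperator (c • p.1.1)) (h2 : IsCompactOperator (c • p.2.1)),
      (τ (⟨c • p.1.1, h1⟩, ⟨c • p.2.1, h2⟩)).1.1 = (starRingEnd ℂ c) • (τ p).1.1 ∧
      (τ (⟨c • p.1.1, h1⟩, ⟨c • p.2.1, h2⟩)).2.1 = (starRingEnd ℂ c) • (τ p).2.1)
    (hmulτ : ∀ (p q : CompactOp H × CompactOp H)
      (h1 : IsCompactOperator (p.1.1.comp q.1.1)) (h2 : IsCompactOperator (p.2.1.comp q.2.1)),
      (τ (⟨p.1.1.comp q.1.1, h1⟩, ⟨p.2.1.comp q.2.1, h2⟩)).1.1 = (τ p).1.1.comp (τ q).1.1 ∧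
      (τ (⟨p.1.1.comp q.1.1, h1⟩, ⟨p.2.1.comp q.2.1, h2⟩)).2.1 = (τ p).2.1.comp (τ q).2.1)
    (hstarτ : ∀ (p : CompactOp H × CompactOp H)
      (h1 : IsCompactOperator (ContinuousLinearMap.adjoint p.1.1))
      (h2 : IsCompactOperator (ContinuousLinearMap.adjoint p.2.1)),
      (τ (⟨ContinuousLinearMap.adjoint p.1.1, h1⟩,
          ⟨ContinuousLinearMap.adjoint p.2.1, h2⟩)).1.1 =
        ContinuousLinearMap.adjoint (τ p).1.1 ∧
      (τ (⟨ContinuousLinearMap.adjoint p.1.1, h1⟩,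
          ⟨ContinuousLinearMap.adjoint p.2.1, h2⟩)).2.1 =
        ContinuousLinearMap.adjoint (τ p).2.1)
    (hinvol : ∀ p : CompactOp H × CompactOp H, τ (τ p) = p)
    (hflip : ∀ p : CompactOp H × CompactOp H, τ (p.2, p.1) = ((τ p).2, (τ p).1)) :
    ∃ σ : CompactOp H → CompactOp H,
      Function.Bijective σ ∧
      (∀ (T S : CompactOp H) (h : IsCompactOperator (T.1 + S.1)),
        (σ ⟨T.1 + S.1, h⟩).1 = (σ T).1 + (σ S).1) ∧
      (∀ (c : ℂ) (T : CompactOp H) (h : IsCompactOperator (c • T.1)),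
        (σ ⟨c • T.1, h⟩).1 = (starRingEnd ℂ c) • (σ T).1) ∧
      (∀ (T S : CompactOp H) (h : IsCompactOperator (T.1.comp S.1)),
        (σ ⟨T.1.comp S.1, h⟩).1 = (σ T).1.comp (σ S).1) ∧
      (∀ (T : CompactOp H) (h : IsCompactOperator (ContinuousLinearMap.adjoint T.1)),
        (σ ⟨ContinuousLinearMap.adjoint T.1, h⟩).1 = ContinuousLinearMap.adjoint (σ T).1) ∧
      (∀ T : CompactOp H, σ (σ T) = T) ∧
      ((∀ p : CompactOp H × CompactOp H, τ p = (σ p.1, σ p.2)) ∨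
       (∀ p : CompactOp H × CompactOp H, τ p = (σ p.2, σ p.1))) :=
  stmt_12_general τ haddτ hsmulτ hmulτ hstarτ hinvol hflip
end
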